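/- Let q ≥ 2 be real and let p ∈ (q, ∞]. Let H ∈ {−1, +1}^{n×n} satisfy H Hᵀ = n·I, let J¹ ∈ ℝ^{n×n} be the matrix whose only nonzero entry is a 1 in position (1,1), and set A = J¹ + n^{−1/q−1/2}·H. Then for every ε with n^{−(1/q − 1/p)} ≤ ε < 1/2 (with the convention 1/∞ = 0): ‖A − J¹‖_{S_p} < 2ε‖A‖_{S_p} and nnz(J¹) = 1, while every Ã ∈ ℝ^{n×n} with ‖A − Ã‖_{S_q} ≤ 0.1‖A‖_{S_q} satisfies nnz(Ã) > n²/4 − 1. -/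

import Mathlib

open scoped BigOperators ENNReal
open Matrix

/-- Number of nonzero entries of a vector. -/
noncomputable def nnzv {n : ℕ} (x : Fin n → ℝ) : ℕ :=
  (Finset.univ.filter fun i => x i ≠ 0).card

/-- The ℓ_p norm of a vector, for a real exponent `p`. -/
noncomputable def lpNorm {n : ℕ} (p : ℝ) (x : Fin n → ℝ) : ℝ :=
  (∑ i, |x i| ^ p) ^ (1 / p)

/-- `IsHead x c y` : `y` is obtained from `x` by keeping (at most) `c` entries that are
largest in absolute value (exactly `min c n` of them, ties broken arbitrarily) and zeroing out the rest. -/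
def IsHead {n : ℕ} (x : Fin n → ℝ) (c : ℕ) (y : Fin n → ℝ) : Prop :=
  ∃ T : Finset (Fin n), T.card = min c n ∧ (∀ i ∈ T, y i = x i) ∧ (∀ i ∉ T, y i = 0) ∧
    ∀ i ∈ T, ∀ j ∉ T, |x j| ≤ |x i|

/-- Replacement for the Mathlib lemma `Matrix.isHermitian_transpose_mul_self` (removed). -/
theorem Matrix.isHermitian_transpose_mul_self {m n : Type*} [Fintype m]
    (A : Matrix m n ℝ) : (Aᵀ * A).IsHermitian := by
  rw [← Matrix.conjTranspose_eq_transpose_of_trivial]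
  exact Matrix.isHermitian_conjTranspose_mul_self A

/-- The singular values of a real matrix: square roots of the eigenvalues of `Aᵀ * A`. -/
noncomputable def singVals {m n : Type*} [Fintype m] [Fintype n] [DecidableEq n]
    (A : Matrix m n ℝ) : n → ℝ :=
  fun j => Real.sqrt ((Matrix.isHermitian_transpose_mul_self A).eigenvalues j)

/-- The Schatten p-(quasi)norm of a real matrix, for a real exponent `p > 0`. -/
noncomputable def schattenF {m n : Type*} [Fintype m] [Fintype n] [DecidableEq n]
    (p : ℝ) (A : Matrix m n ℝ) : ℝ :=
  (∑ j, singVals A j ^ p) ^ (1 / p)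

/-- The spectral norm (Schatten ∞-norm): the largest singular value. -/
noncomputable def specNorm {m n : Type*} [Fintype m] [Fintype n] [DecidableEq n]
    (A : Matrix m n ℝ) : ℝ :=
  ⨆ j, singVals A j

open Classical in
/-- The Schatten p-norm with exponent `p ∈ (0,∞]`. -/
noncomputable def schattenE {m n : Type*} [Fintype m] [Fintype n] [DecidableEq n]
    (p : ℝ≥0∞) (A : Matrix m n ℝ) : ℝ :=
  if p = ⊤ then specNorm A else schattenF p.toReal A

/-- Number of nonzero entries of a matrix. -/
noncomputable def nnz {m n : Type*} [Fintype m] [Fintype n] (A : Matrix m n ℝ) : ℕ :=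
  (Finset.univ.filter fun ij : m × n => A ij.1 ij.2 ≠ 0).card


/-!
`A - J¹ = c H` with `c = n^{-1/q-1/2}` is `t = n^{-1/q}` times an isometry, so all its singular
values equal `t` and `‖A - J¹‖_{S_p} = n^{1/p} t ≤ ε`, while `‖A e₁‖ ≥ 1 - t > 1/2` bounds the
top singular value of `A` from below.

For the sparsity bound, write `σ_j = ‖A v_j‖` with `v_j` the right singular vectors; then
`σ_j ≤ |v_j(1)| + t`, and Minkowski's inequality over `j` gives `‖A‖_{S_q} ≤ 1 + n^{1/q} t = 2`.
All entries of `A` but one have absolute value `c`, so `‖A - Ã‖_F² ≥ (n² - nnz(Ã) - 1) c²`,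
whereas `‖A - Ã‖_F ≤ n^{1/2-1/q} ‖A - Ã‖_{S_q} = n c ‖A - Ã‖_{S_q}`. Hence
`‖A - Ã‖_{S_q} ≤ 0.2` forces `nnz(Ã) ≥ 0.96 n² - 1`.
-/

open scoped RealInnerProductSpace

theorem Real.rpow_le_sq_of_abs_le_one {x q : ℝ} (hx : |x| ≤ 1) (hq : 2 ≤ q) :
    |x| ^ q ≤ x ^ 2 := by
  rw [← sq_abs, ← Real.rpow_natCast]
  exact Real.rpow_le_rpow_of_exponent_ge' (abs_nonneg x) hx (by norm_num) (by exact_mod_cast hq)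

theorem Real.sum_sq_le_card_rpow_mul_rpow_sq {ι : Type*} [Fintype ι] {x : ι → ℝ}
    (hx : ∀ i, 0 ≤ x i) {q : ℝ} (hq : 2 ≤ q) :
    ∑ i, x i ^ 2 ≤ (Fintype.card ι : ℝ) ^ (1 - 2 / q) * ((∑ i, x i ^ q) ^ (1 / q)) ^ 2 := by
  have hq0 : 0 < q := by linarith
  have hS : 0 ≤ ∑ i, x i ^ 2 := Finset.sum_nonneg fun i _ => sq_nonneg _
  have hT : 0 ≤ ∑ i, x i ^ q := Finset.sum_nonneg fun i _ => Real.rpow_nonneg (hx i) q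
  have hpow : ∀ i, (x i ^ 2) ^ (q / 2) = x i ^ q := fun i => by
    rw [← Real.rpow_natCast, ← Real.rpow_mul (hx i)]
    congr 1
    ring
  have hmean : (∑ i, x i ^ 2) ^ (q / 2) ≤
      (Fintype.card ι : ℝ) ^ (q / 2 - 1) * ∑ i, x i ^ q := by
    simpa only [hpow, Finset.card_univ] using
      Real.rpow_sum_le_const_mul_sum_rpow_of_nonneg Finset.univ (p := q / 2) (by linarith)
        (fun i _ => sq_nonneg (x i))
  calc ∑ i, x i ^ 2 = ((∑ i, x i ^ 2) ^ (q / 2)) ^ (2 / q) := by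
        rw [← Real.rpow_mul hS, div_mul_div_cancel₀ two_ne_zero, div_self hq0.ne', Real.rpow_one]
    _ ≤ ((Fintype.card ι : ℝ) ^ (q / 2 - 1) * ∑ i, x i ^ q) ^ (2 / q) := by gcongr
    _ = _ := by
        rw [Real.mul_rpow (by positivity) hT, ← Real.rpow_mul (by positivity),
          ← Real.rpow_natCast, ← Real.rpow_mul hT]
        congr 2 <;> push_cast <;> field_simp

theorem OrthonormalBasis.sum_sq_apply {ι n : Type*} [Fintype ι] [Fintype n] [DecidableEq n]
    (b : OrthonormalBasis ι ℝ (EuclideanSpace ℝ n)) (z : n) : ∑ j, b j z ^ 2 = 1 := by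
  simpa [EuclideanSpace.inner_single_right] using b.sum_sq_inner_right (EuclideanSpace.single z 1)

theorem Matrix.transpose_mul_self_eq_smul_one {n K : Type*} [Fintype n] [DecidableEq n] [Field K]
    {H : Matrix n n K} {a : K} (ha : a ≠ 0) (hH : H * Hᵀ = a • 1) : Hᵀ * H = a • 1 := by
  have hinv : (a⁻¹ • Hᵀ) * H = 1 :=
    mul_eq_one_comm.mp (by rw [Matrix.mul_smul, hH, smul_smul, inv_mul_cancel₀ ha, one_smul])
  rw [← one_smul K (Hᵀ * H), ← mul_inv_cancel₀ ha, ← smul_smul, ← Matrix.smul_mul, hinv]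

section SingularValues

variable {m n : Type*} [Fintype m] [Fintype n] [DecidableEq n]

noncomputable abbrev rightSingVecs (A : Matrix m n ℝ) :
    OrthonormalBasis n ℝ (EuclideanSpace ℝ n) :=
  (isHermitian_transpose_mul_self A).eigenvectorBasis

theorem norm_sq_toEuclideanLin_eq_inner (A : Matrix m n ℝ) (x : EuclideanSpace ℝ n) :
    ‖toEuclideanLin A x‖ ^ 2 = ⟪x, toEuclideanLin (Aᵀ * A) x⟫ := by
  classical
  rw [← conjTranspose_eq_transpose_of_trivial, toLpLin_mul_same, LinearMap.comp_apply,
    toEuclideanLin_conjTranspose_eq_adjoint, LinearMap.adjoint_inner_right,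
    real_inner_self_eq_norm_sq]

theorem singVals_nonneg (A : Matrix m n ℝ) (j : n) : 0 ≤ singVals A j := Real.sqrt_nonneg _

theorem singVals_sq (A : Matrix m n ℝ) (j : n) :
    singVals A j ^ 2 = (isHermitian_transpose_mul_self A).eigenvalues j :=
  Real.sq_sqrt (eigenvalues_conjTranspose_mul_self_nonneg A j)

theorem toEuclideanLin_transpose_mul_self_rightSingVecs (A : Matrix m n ℝ) (j : n) :
    toEuclideanLin (Aᵀ * A) (rightSingVecs A j) = singVals A j ^ 2 • rightSingVecs A j := by
  rw [singVals_sq]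
  ext i
  exact congrFun ((isHermitian_transpose_mul_self A).mulVec_eigenvectorBasis j) i

theorem singVals_eq_norm_toEuclideanLin (A : Matrix m n ℝ) (j : n) :
    singVals A j = ‖toEuclideanLin A (rightSingVecs A j)‖ := by
  rw [← sq_eq_sq₀ (singVals_nonneg A j) (norm_nonneg _), norm_sq_toEuclideanLin_eq_inner,
    toEuclideanLin_transpose_mul_self_rightSingVecs, inner_smul_right,
    real_inner_self_eq_norm_sq, (rightSingVecs A).orthonormal.1 j]
  ring

theorem norm_sq_toEuclideanLin_eq_sum (A : Matrix m n ℝ) (x : EuclideanSpace ℝ n) :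
    ‖toEuclideanLin A x‖ ^ 2 = ∑ j, singVals A j ^ 2 * ⟪rightSingVecs A j, x⟫ ^ 2 := by
  have hsymm := isSymmetric_toEuclideanLin_iff.mpr (isHermitian_transpose_mul_self A)
  rw [norm_sq_toEuclideanLin_eq_inner, ← (rightSingVecs A).sum_inner_mul_inner]
  refine Finset.sum_congr rfl fun j _ => ?_
  rw [← hsymm, toEuclideanLin_transpose_mul_self_rightSingVecs, inner_smul_left,
    real_inner_comm x]
  simp only [conj_trivial]
  ring

theorem exists_norm_toEuclideanLin_le_singVals (A : Matrix m n ℝ) {x : EuclideanSpace ℝ n}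
    (hx : ‖x‖ = 1) : ∃ j, ‖toEuclideanLin A x‖ ≤ singVals A j := by
  have : Nonempty n := by
    by_contra h
    rw [not_nonempty_iff] at h
    simp [Subsingleton.elim x 0] at hx
  obtain ⟨j, -, hj⟩ := Finset.exists_max_image Finset.univ (singVals A) Finset.univ_nonempty
  refine ⟨j, le_of_sq_le_sq ?_ (singVals_nonneg A j)⟩
  calc ‖toEuclideanLin A x‖ ^ 2 = ∑ i, singVals A i ^ 2 * ⟪rightSingVecs A i, x⟫ ^ 2 :=
        norm_sq_toEuclideanLin_eq_sum A x
    _ ≤ ∑ i, singVals A j ^ 2 * ⟪rightSingVecs A i, x⟫ ^ 2 := by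
        gcongr with i
        · exact singVals_nonneg A i
        · exact hj i (Finset.mem_univ i)
    _ = singVals A j ^ 2 := by
        rw [← Finset.mul_sum, (rightSingVecs A).sum_sq_inner_right, hx, one_pow, mul_one]

theorem sum_singVals_sq (A : Matrix m n ℝ) :
    ∑ j, singVals A j ^ 2 = ∑ i, ∑ k, A i k ^ 2 := by
  have h : (Aᵀ * A).trace = _ := (isHermitian_transpose_mul_self A).trace_eq_sum_eigenvalues
  simp only [RCLike.ofReal_real_eq_id, id_eq] at h
  simp_rw [singVals_sq, ← h, trace, diag, mul_apply, transpose_apply, ← sq]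
  exact Finset.sum_comm

theorem schattenF_nonneg (A : Matrix m n ℝ) (p : ℝ) : 0 ≤ schattenF p A :=
  Real.rpow_nonneg (Finset.sum_nonneg fun j _ => Real.rpow_nonneg (singVals_nonneg A j) p) _

theorem singVals_le_schattenF (A : Matrix m n ℝ) {p : ℝ} (hp : 0 < p) (j : n) :
    singVals A j ≤ schattenF p A := by
  have hσ := singVals_nonneg A
  calc singVals A j = (singVals A j ^ p) ^ (1 / p) := by
        rw [← Real.rpow_mul (hσ j), mul_one_div_cancel hp.ne', Real.rpow_one]
    _ ≤ schattenF p A := by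
        unfold schattenF
        gcongr
        · exact Real.rpow_nonneg (hσ j) p
        · exact Finset.single_le_sum (fun i _ => Real.rpow_nonneg (hσ i) p) (Finset.mem_univ j)

theorem singVals_le_specNorm (A : Matrix m n ℝ) (j : n) : singVals A j ≤ specNorm A :=
  le_ciSup (Set.finite_range _).bddAbove j

theorem singVals_le_schattenE (A : Matrix m n ℝ) {p : ℝ≥0∞} (hp : p ≠ 0) (j : n) :
    singVals A j ≤ schattenE p A := by
  unfold schattenE
  split_ifs with h
  · exact singVals_le_specNorm A j
  · exact singVals_le_schattenF A (ENNReal.toReal_pos hp h) j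

theorem sum_sq_le_card_rpow_mul_schattenF_sq (A : Matrix m n ℝ) {q : ℝ} (hq : 2 ≤ q) :
    ∑ i, ∑ k, A i k ^ 2 ≤ (Fintype.card n : ℝ) ^ (1 - 2 / q) * schattenF q A ^ 2 := by
  rw [← sum_singVals_sq]
  exact Real.sum_sq_le_card_rpow_mul_rpow_sq (singVals_nonneg A) hq

end SingularValues

section ScaledIsometry

variable {m n : Type*} [Fintype m] [Fintype n] [DecidableEq n] {B : Matrix m n ℝ} {s : ℝ}

theorem norm_toEuclideanLin_eq_of_transpose_mul_self_eq (hs : 0 ≤ s) (hB : Bᵀ * B = s ^ 2 • 1)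
    (x : EuclideanSpace ℝ n) : ‖toEuclideanLin B x‖ = s * ‖x‖ := by
  rw [← sq_eq_sq₀ (norm_nonneg _) (by positivity), norm_sq_toEuclideanLin_eq_inner, hB,
    map_smul, toLpLin_one, LinearMap.smul_apply, LinearMap.id_apply, inner_smul_right,
    real_inner_self_eq_norm_sq, mul_pow]

theorem singVals_eq_of_norm_eq (hB : ∀ x, ‖toEuclideanLin B x‖ = s * ‖x‖) (j : n) :
    singVals B j = s := by
  rw [singVals_eq_norm_toEuclideanLin, hB, (rightSingVecs B).orthonormal.1 j, mul_one]

theorem schattenF_eq_of_norm_eq (hB : ∀ x, ‖toEuclideanLin B x‖ = s * ‖x‖) (hs : 0 ≤ s)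
    {p : ℝ} (hp : p ≠ 0) : schattenF p B = (Fintype.card n : ℝ) ^ (1 / p) * s := by
  simp only [schattenF, singVals_eq_of_norm_eq hB, Finset.sum_const, Finset.card_univ,
    nsmul_eq_mul]
  rw [Real.mul_rpow (by positivity) (by positivity), ← Real.rpow_mul hs, mul_one_div_cancel hp,
    Real.rpow_one]

theorem specNorm_eq_of_norm_eq [Nonempty n] (hB : ∀ x, ‖toEuclideanLin B x‖ = s * ‖x‖) :
    specNorm B = s := by
  simp only [specNorm, singVals_eq_of_norm_eq hB, ciSup_const]

theorem schattenE_eq_of_norm_eq [Nonempty n] (hB : ∀ x, ‖toEuclideanLin B x‖ = s * ‖x‖)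
    (hs : 0 ≤ s) {p : ℝ≥0∞} (hp : p ≠ 0) :
    schattenE p B = (Fintype.card n : ℝ) ^ (1 / p.toReal) * s := by
  unfold schattenE
  split_ifs with h
  · simp [h, specNorm_eq_of_norm_eq hB]
  · exact schattenF_eq_of_norm_eq hB hs (ENNReal.toReal_pos hp h).ne'

end ScaledIsometry

theorem norm_toEuclideanLin_smul_of_mul_transpose_eq {n : Type*} [Fintype n] [DecidableEq n]
    {H : Matrix n n ℝ} (hH : H * Hᵀ = (Fintype.card n : ℝ) • 1) {c : ℝ} (hc : 0 ≤ c)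
    (x : EuclideanSpace ℝ n) :
    ‖toEuclideanLin (c • H) x‖ = c * √(Fintype.card n) * ‖x‖ := by
  rcases isEmpty_or_nonempty n with hn | hn
  · simp [Subsingleton.elim x 0]
  refine norm_toEuclideanLin_eq_of_transpose_mul_self_eq (by positivity) ?_ x
  rw [transpose_smul, Matrix.smul_mul, Matrix.mul_smul,
    transpose_mul_self_eq_smul_one (by positivity) hH, smul_smul, mul_pow,
    Real.sq_sqrt (by positivity), sq, smul_smul]

section RankOnePerturbation

variable {n : Type*} [Fintype n] [DecidableEq n] (z : n) {B : Matrix n n ℝ} {s : ℝ}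

theorem norm_toEuclideanLin_single_one (x : EuclideanSpace ℝ n) :
    ‖toEuclideanLin (single z z (1 : ℝ)) x‖ = |x z| := by
  have h : toEuclideanLin (single z z (1 : ℝ)) x = EuclideanSpace.single z (x z) := by
    ext i
    simp [toLpLin_apply, single_mulVec, Function.update_apply]
  rw [h, PiLp.norm_single, Real.norm_eq_abs]

theorem singVals_single_add_le (hB : ∀ x, ‖toEuclideanLin B x‖ = s * ‖x‖) (j : n) :
    singVals (single z z 1 + B) j ≤ |rightSingVecs (single z z 1 + B) j z| + s := by
  rw [singVals_eq_norm_toEuclideanLin, map_add, LinearMap.add_apply]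
  refine (norm_add_le _ _).trans ?_
  rw [norm_toEuclideanLin_single_one, hB, (rightSingVecs _).orthonormal.1 j, mul_one]

theorem exists_one_sub_le_singVals_single_add (hB : ∀ x, ‖toEuclideanLin B x‖ = s * ‖x‖) :
    ∃ j, 1 - s ≤ singVals (single z z 1 + B) j := by
  obtain ⟨j, hj⟩ := exists_norm_toEuclideanLin_le_singVals (single z z 1 + B)
    ((PiLp.norm_single 2 _ z (1 : ℝ)).trans norm_one)
  refine ⟨j, le_trans ?_ hj⟩
  have h := norm_sub_norm_le (toEuclideanLin (single z z 1) (EuclideanSpace.single z (1 : ℝ)))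
    (-toEuclideanLin B (EuclideanSpace.single z 1))
  rwa [norm_neg, sub_neg_eq_add, norm_toEuclideanLin_single_one, hB, PiLp.norm_single,
    PiLp.single_apply, if_pos rfl, abs_one, norm_one, mul_one, ← LinearMap.add_apply,
    ← map_add] at h

theorem schattenE_lt_two_mul_schattenE_single_add [Nonempty n] (hs : 0 < s)
    (hB : ∀ x, ‖toEuclideanLin B x‖ = s * ‖x‖) {p : ℝ≥0∞} (hp : p ≠ 0) {ε : ℝ}
    (hε1 : (Fintype.card n : ℝ) ^ (1 / p.toReal) * s ≤ ε) (hε2 : ε < 1 / 2) :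
    schattenE p B < 2 * ε * schattenE p (single z z 1 + B) := by
  have hs_le : s ≤ (Fintype.card n : ℝ) ^ (1 / p.toReal) * s :=
    le_mul_of_one_le_left hs.le
      (Real.one_le_rpow (by exact_mod_cast Fintype.card_pos) (by positivity))
  obtain ⟨j, hj⟩ := exists_one_sub_le_singVals_single_add z hB
  calc schattenE p B = (Fintype.card n : ℝ) ^ (1 / p.toReal) * s :=
        schattenE_eq_of_norm_eq hB hs.le hp
    _ ≤ ε := hε1
    _ < 2 * ε * (1 - s) := by nlinarith
    _ ≤ 2 * ε * singVals _ j := by gcongr; linarith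
    _ ≤ 2 * ε * schattenE p _ := by
        gcongr
        · linarith
        · exact singVals_le_schattenE _ hp j

theorem schattenF_single_add_le (hB : ∀ x, ‖toEuclideanLin B x‖ = s * ‖x‖) (hs : 0 ≤ s)
    {q : ℝ} (hq : 2 ≤ q) :
    schattenF q (single z z 1 + B) ≤ 1 + (Fintype.card n : ℝ) ^ (1 / q) * s := by
  set b := rightSingVecs (single z z 1 + B)
  have hb1 : ∀ j, |b j z| ≤ 1 := fun j => by
    rw [← sq_le_one_iff_abs_le_one, ← b.sum_sq_apply z]
    exact Finset.single_le_sum (f := fun j => b j z ^ 2) (fun _ _ => sq_nonneg _)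
      (Finset.mem_univ j)
  calc schattenF q (single z z 1 + B) ≤ (∑ j, (|b j z| + s) ^ q) ^ (1 / q) := by
        unfold schattenF
        gcongr with j
        exacts [Finset.sum_nonneg fun j _ => Real.rpow_nonneg (singVals_nonneg _ j) q,
          singVals_nonneg _ j, singVals_single_add_le z hB j]
    _ ≤ (∑ j, |b j z| ^ q) ^ (1 / q) + (∑ _j : n, s ^ q) ^ (1 / q) :=
        Real.Lp_add_le_of_nonneg Finset.univ (by linarith) (fun j _ => abs_nonneg _)
          (fun _ _ => hs)
    _ ≤ 1 + (Fintype.card n : ℝ) ^ (1 / q) * s := by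
        gcongr
        · refine Real.rpow_le_one (by positivity) ?_ (by positivity)
          calc ∑ j, |b j z| ^ q ≤ ∑ j, b j z ^ 2 :=
                Finset.sum_le_sum fun j _ => Real.rpow_le_sq_of_abs_le_one (hb1 j) hq
            _ = 1 := b.sum_sq_apply z
        · rw [Finset.sum_const, Finset.card_univ, nsmul_eq_mul,
            Real.mul_rpow (by positivity) (by positivity), ← Real.rpow_mul hs,
            mul_one_div_cancel (by positivity), Real.rpow_one]

end RankOnePerturbation

theorem nnz_single {m n : Type*} [Fintype m] [Fintype n] [DecidableEq m] [DecidableEq n]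
    (i : m) (j : n) {a : ℝ} (ha : a ≠ 0) : nnz (single i j a) = 1 := by
  rw [nnz, Finset.card_eq_one]
  refine ⟨(i, j), ?_⟩
  ext ⟨i', j'⟩
  rw [Finset.mem_filter, Finset.mem_singleton, Prod.mk.injEq, single_apply]
  by_cases h : i = i' ∧ j = j'
  · simp [h, ha]
  · simp only [if_neg h]
    grind

theorem sq_single_add_smul_apply_of_ne {n : Type*} [DecidableEq n] {H : Matrix n n ℝ}
    (hH : ∀ i j, H i j = 1 ∨ H i j = -1) (z : n) (c : ℝ) {ij : n × n} (hij : ij ≠ (z, z)) :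
    (single z z (1 : ℝ) + c • H) ij.1 ij.2 ^ 2 = c ^ 2 := by
  obtain ⟨i, k⟩ := ij
  have hJ : single z z (1 : ℝ) i k = 0 := by
    rw [single_apply, if_neg]
    rintro ⟨rfl, rfl⟩
    exact hij rfl
  simp only [Matrix.add_apply, hJ, zero_add, Matrix.smul_apply, smul_eq_mul, mul_pow]
  rcases hH i k with h | h <;> simp [h]
theorem sub_nnz_mul_sq_le_sum_sq_sub {m n : Type*} [Fintype m] [Fintype n] {A : Matrix m n ℝ}
    {c : ℝ} (z : m × n) (hA : ∀ ij ≠ z, c ^ 2 ≤ A ij.1 ij.2 ^ 2) (At : Matrix m n ℝ) :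
    ((Fintype.card m * Fintype.card n : ℝ) - nnz At - 1) * c ^ 2 ≤
      ∑ i, ∑ k, (A - At) i k ^ 2 := by
  classical
  set zeros := Finset.univ.filter fun ij : m × n => At ij.1 ij.2 = 0
  have hsplit : zeros.card + nnz At = Fintype.card m * Fintype.card n := by
    rw [← Fintype.card_prod, ← Finset.card_univ]
    exact Finset.card_filter_add_card_filter_not _
  have herase : zeros.card ≤ (zeros.erase z).card + 1 := by
    have := Finset.pred_card_le_card_erase (s := zeros) (a := z)
    omega
  have hZ : (Fintype.card m * Fintype.card n : ℝ) - nnz At - 1 ≤ (zeros.erase z).card := by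
    have hsplit' : (zeros.card + nnz At : ℝ) = Fintype.card m * Fintype.card n := by
      exact_mod_cast hsplit
    have herase' : (zeros.card : ℝ) ≤ (zeros.erase z).card + 1 := by exact_mod_cast herase
    linarith
  calc ((Fintype.card m * Fintype.card n : ℝ) - nnz At - 1) * c ^ 2
      ≤ (zeros.erase z).card * c ^ 2 := by gcongr
    _ = ∑ ij ∈ zeros.erase z, c ^ 2 := by rw [Finset.sum_const, nsmul_eq_mul]
    _ ≤ ∑ ij ∈ zeros.erase z, (A - At) ij.1 ij.2 ^ 2 := Finset.sum_le_sum fun ij hij => by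
        obtain ⟨hne, hij⟩ := Finset.mem_erase.mp hij
        rw [Matrix.sub_apply, (Finset.mem_filter.mp hij).2, sub_zero]
        exact hA ij hne
    _ ≤ ∑ ij : m × n, (A - At) ij.1 ij.2 ^ 2 :=
        Finset.sum_le_sum_of_subset_of_nonneg (Finset.subset_univ _) fun _ _ _ => sq_nonneg _
    _ = ∑ i, ∑ k, (A - At) i k ^ 2 := Fintype.sum_prod_type _

theorem card_sq_mul_one_sub_schattenF_sq_sub_one_le_nnz {n : Type*} [Fintype n] [DecidableEq n]
    {A : Matrix n n ℝ} {c q : ℝ} (hq : 2 ≤ q) (hc : c ≠ 0)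
    (hcq : (Fintype.card n : ℝ) ^ (1 - 2 / q) ≤ Fintype.card n ^ 2 * c ^ 2)
    (z : n × n) (hA : ∀ ij ≠ z, c ^ 2 ≤ A ij.1 ij.2 ^ 2) (At : Matrix n n ℝ) :
    (Fintype.card n : ℝ) ^ 2 * (1 - schattenF q (A - At) ^ 2) - 1 ≤ nnz At := by
  have hlower := sub_nnz_mul_sq_le_sum_sq_sub z hA At
  have hupper := sum_sq_le_card_rpow_mul_schattenF_sq (A - At) hq
  have hc2 : 0 < c ^ 2 := by positivity
  have : ((Fintype.card n : ℝ) ^ 2 - nnz At - 1) * c ^ 2 ≤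
      (Fintype.card n ^ 2 * schattenF q (A - At) ^ 2) * c ^ 2 := by
    nlinarith [mul_le_mul_of_nonneg_right hcq (sq_nonneg (schattenF q (A - At)))]
  nlinarith [le_of_mul_le_mul_right this hc2]

section HardInstance

variable {n : Type*} [Fintype n] [DecidableEq n] [Nonempty n] {H : Matrix n n ℝ}

theorem norm_toEuclideanLin_rpow_smul (hHH : H * Hᵀ = (Fintype.card n : ℝ) • 1) (q : ℝ)
    (x : EuclideanSpace ℝ n) :
    ‖toEuclideanLin ((Fintype.card n : ℝ) ^ (-(1 / q) - 1 / 2) • H) x‖ =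
      (Fintype.card n : ℝ) ^ (-(1 / q)) * ‖x‖ := by
  have hN : (0 : ℝ) < Fintype.card n := by exact_mod_cast Fintype.card_pos
  rw [norm_toEuclideanLin_smul_of_mul_transpose_eq hHH (by positivity), Real.sqrt_eq_rpow,
    ← Real.rpow_add hN]
  congr 3
  ring

theorem lt_nnz_of_schattenF_sub_le (hHH : H * Hᵀ = (Fintype.card n : ℝ) • 1)
    (hH : ∀ i j, H i j = 1 ∨ H i j = -1) (z : n) {q : ℝ} (hq : 2 ≤ q) {At : Matrix n n ℝ}
    (hAt : schattenF q (single z z 1 + (Fintype.card n : ℝ) ^ (-(1 / q) - 1 / 2) • H - At) ≤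
      0.1 * schattenF q (single z z 1 + (Fintype.card n : ℝ) ^ (-(1 / q) - 1 / 2) • H)) :
    (Fintype.card n : ℝ) ^ 2 / 4 - 1 < nnz At := by
  have hN : (0 : ℝ) < Fintype.card n := by exact_mod_cast Fintype.card_pos
  set c := (Fintype.card n : ℝ) ^ (-(1 / q) - 1 / 2)
  have hA := schattenF_single_add_le z (norm_toEuclideanLin_rpow_smul hHH q) (by positivity) hq
  rw [← Real.rpow_add hN, add_neg_cancel, Real.rpow_zero] at hA
  have hcq : (Fintype.card n : ℝ) ^ (1 - 2 / q) ≤ Fintype.card n ^ 2 * c ^ 2 := by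
    rw [← Real.rpow_natCast, ← Real.rpow_natCast c, ← Real.rpow_mul hN.le, ← Real.rpow_add hN]
    apply le_of_eq
    congr 1
    ring
  have hsparse := card_sq_mul_one_sub_schattenF_sq_sub_one_le_nnz (c := c) (by linarith)
    (by positivity) hcq (z, z) (fun ij hij => (sq_single_add_smul_apply_of_ne hH z c hij).ge) At
  have hD : schattenF q (single z z 1 + c • H - At) ≤ 1 / 5 := by norm_num at hAt ⊢; linarith
  nlinarith [mul_le_mul hD hD (schattenF_nonneg _ q) (by norm_num)]

end HardInstance

/-- hard instance for `2 ≤ q < p ≤ ∞`: `A = J¹ + n^{-1/q-1/2}·H` with `H`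
a Hadamard-type matrix. Here `p : ℝ≥0∞` and `1 / p.toReal = 0` when `p = ∞`. -/
theorem stmt10 (q : ℝ) (hq : 2 ≤ q) (p : ℝ≥0∞) (hp : ENNReal.ofReal q < p)
    (n : ℕ) (hn : 0 < n)
    (H : Matrix (Fin n) (Fin n) ℝ) (hH : ∀ i j, H i j = 1 ∨ H i j = -1)
    (hHH : H * Hᵀ = (n : ℝ) • (1 : Matrix (Fin n) (Fin n) ℝ))
    (J1 : Matrix (Fin n) (Fin n) ℝ)
    (hJ1 : J1 = Matrix.single ⟨0, hn⟩ ⟨0, hn⟩ (1 : ℝ))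
    (A : Matrix (Fin n) (Fin n) ℝ)
    (hA : A = J1 + (n : ℝ) ^ (-(1 / q) - 1 / 2) • H)
    (ε : ℝ) (hε1 : (n : ℝ) ^ (-(1 / q - 1 / p.toReal)) ≤ ε) (hε2 : ε < 1 / 2) :
    schattenE p (A - J1) < 2 * ε * schattenE p A ∧
    nnz J1 = 1 ∧
    ∀ At : Matrix (Fin n) (Fin n) ℝ,
      schattenF q (A - At) ≤ 0.1 * schattenF q A →
      (n : ℝ) ^ 2 / 4 - 1 < (nnz At : ℝ) := by
  have : NeZero n := ⟨hn.ne'⟩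
  have hn0 : (0 : ℝ) < n := by exact_mod_cast hn
  have hHH' : H * Hᵀ = (Fintype.card (Fin n) : ℝ) • 1 := by rwa [Fintype.card_fin]
  have hB := norm_toEuclideanLin_rpow_smul hHH' q
  simp only [Fintype.card_fin] at hB
  subst hJ1 hA
  rw [add_sub_cancel_left]
  refine ⟨?_, nnz_single _ _ one_ne_zero, fun At hAt => ?_⟩
  · refine schattenE_lt_two_mul_schattenE_single_add _ (by positivity) hB
      (lt_of_le_of_lt bot_le hp).ne' ?_ hε2
    rw [Fintype.card_fin, ← Real.rpow_add hn0]
    convert hε1 using 2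
    ring
  · simpa only [Fintype.card_fin] using
      lt_nnz_of_schattenF_sub_le hHH' hH _ hq (by simpa only [Fintype.card_fin] using hAt)
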